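/- arXiv:nlin/0603060 — 6 statements merged into one kernel-verified Lean document; each statement's English description precedes it below -/
import Mathlib

section
/- (Gibbons: taking p-moments is a Poisson map, one-dimensional case.) Let m, n be natural numbers with m + n ≥ 1, let α, β : ℝ → ℝ be smooth and compactly supported, and let f : ℝ² → ℝ be measurable with (q,p) ↦ |f(q,p)|·(1+|p|)^(m+n−1) integrable on ℝ². Then ∬_{ℝ²} f(q,p)·[α(q)p^m, β(q)p^n](q,p) dq dp = ∫_ℝ A_{m+n−1}(q)·( m·α(q)·β'(q) − n·β(q)·α'(q) ) dq, where A_k(q) := ∫_ℝ p^k f(q,p) dp denotes the k-th p-moment of f. That is, the Lie–Poisson Vlasov pairing of the weighted monomials α(q)p^m and β(q)p^n against f equals the pairing of the Kupershmidt–Manin bracket [[α_m, β_n]] against the moment A_{m+n−1}. -/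
open MeasureTheory

/-- Gibbons: taking p-moments is a Poisson map, 1D case.
The Lie–Poisson Vlasov pairing of the weighted monomials `α(q)p^m` and `β(q)p^n`
against `f` equals the pairing of the Kupershmidt–Manin bracket `[[α_m, β_n]]`
against the moment `A_{m+n−1}(q) := ∫ p^(m+n−1) f(q,p) dp`. -/
theorem pmoments_poisson_map_1d
    (m n : ℕ) (hmn : 1 ≤ m + n) (α β : ℝ → ℝ)
    (hα : ContDiff ℝ (⊤ : ℕ∞) α) (hαs : HasCompactSupport α)
    (hβ : ContDiff ℝ (⊤ : ℕ∞) β) (hβs : HasCompactSupport β)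
    (f : ℝ × ℝ → ℝ) (hf : Measurable f)
    (hint : Integrable (fun x : ℝ × ℝ => |f x| * (1 + |x.2|) ^ (m + n - 1))) :
    ∫ x : ℝ × ℝ, f x *
        (deriv (fun p' => α x.1 * p' ^ m) x.2 * deriv (fun q' => β q' * x.2 ^ n) x.1
          - deriv (fun q' => α q' * x.2 ^ m) x.1 * deriv (fun p' => β x.1 * p' ^ n) x.2)
    = ∫ q : ℝ, (∫ p : ℝ, p ^ (m + n - 1) * f (q, p)) *
        ((m : ℝ) * α q * deriv β q - (n : ℝ) * β q * deriv α q) := by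
  set k := m + n - 1 with hk
  set C : ℝ → ℝ := fun q => (m : ℝ) * α q * deriv β q - (n : ℝ) * β q * deriv α q with hC
  have hαd : Differentiable ℝ α := hα.differentiable (by simp)
  have hβd : Differentiable ℝ β := hβ.differentiable (by simp)
  have hα' : Continuous (deriv α) := hα.continuous_deriv (by simp)
  have hβ' : Continuous (deriv β) := hβ.continuous_deriv (by simp)
  have hCc : Continuous C := by
    simp only [hC]
    fun_prop
  have hCs : HasCompactSupport C := by
    have h1 : HasCompactSupport (fun q => (m : ℝ) * α q * deriv β q) := by
      apply HasCompactSupport.mul_right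
      exact hαs.mul_left
    have h2 : HasCompactSupport (fun q => (n : ℝ) * β q * deriv α q) := by
      apply HasCompactSupport.mul_right
      exact hβs.mul_left
    simp only [hC, sub_eq_add_neg]
    exact h1.add h2.neg
  -- pointwise identity for the integrand
  have key : ∀ x : ℝ × ℝ, f x *
        (deriv (fun p' => α x.1 * p' ^ m) x.2 * deriv (fun q' => β q' * x.2 ^ n) x.1
          - deriv (fun q' => α q' * x.2 ^ m) x.1 * deriv (fun p' => β x.1 * p' ^ n) x.2)
      = C x.1 * (x.2 ^ k * f x) := by
    rintro ⟨q, p⟩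
    have d1 : deriv (fun p' => α q * p' ^ m) p = α q * ((m : ℝ) * p ^ (m - 1)) := by
      rw [deriv_const_mul _ (differentiable_pow m).differentiableAt, deriv_pow_field]
    have d2 : deriv (fun q' => β q' * p ^ n) q = deriv β q * p ^ n := by
      rw [deriv_mul_const (hβd q)]
    have d3 : deriv (fun q' => α q' * p ^ m) q = deriv α q * p ^ m := by
      rw [deriv_mul_const (hαd q)]
    have d4 : deriv (fun p' => β q * p' ^ n) p = β q * ((n : ℝ) * p ^ (n - 1)) := by
      rw [deriv_const_mul _ (differentiable_pow n).differentiableAt, deriv_pow_field]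
    have e1 : (m : ℝ) * (p ^ (m - 1) * p ^ n) = (m : ℝ) * p ^ k := by
      cases m with
      | zero => simp
      | succ m' =>
        have h : m' + 1 - 1 + n = k := by omega
        rw [← pow_add, h]
    have e2 : (n : ℝ) * (p ^ m * p ^ (n - 1)) = (n : ℝ) * p ^ k := by
      cases n with
      | zero => simp
      | succ n' =>
        have h : m + (n' + 1 - 1) = k := by omega
        rw [← pow_add, h]
    simp only [d1, d2, d3, d4, hC]
    linear_combination (f (q, p) * α q * deriv β q) * e1 - (f (q, p) * β q * deriv α q) * e2
  -- the transformed integrand is integrable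
  obtain ⟨M, hM⟩ := hCs.exists_bound_of_continuous hCc
  have hM0 : 0 ≤ M := le_trans (norm_nonneg _) (hM 0)
  have hmeas : AEStronglyMeasurable (fun x : ℝ × ℝ => C x.1 * (x.2 ^ k * f x)) volume := by
    apply Continuous.aestronglyMeasurable (by fun_prop) |>.mul
    exact ((measurable_snd.pow_const k).mul hf).aestronglyMeasurable
  have hgint : Integrable (fun x : ℝ × ℝ => C x.1 * (x.2 ^ k * f x)) := by
    refine (hint.const_mul M).mono' hmeas (Filter.Eventually.of_forall fun x => ?_)
    have h1 : ‖C x.1 * (x.2 ^ k * f x)‖ = ‖C x.1‖ * (|x.2| ^ k * |f x|) := by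
      simp [abs_mul, abs_pow]
    rw [h1]
    have h2 : |x.2| ^ k ≤ (1 + |x.2|) ^ k :=
      pow_le_pow_left₀ (abs_nonneg _) (by linarith [abs_nonneg x.2]) k
    calc ‖C x.1‖ * (|x.2| ^ k * |f x|)
        ≤ M * ((1 + |x.2|) ^ k * |f x|) := by
          apply mul_le_mul (hM x.1) _ (by positivity) hM0
          exact mul_le_mul_of_nonneg_right h2 (abs_nonneg _)
      _ = M * (|f x| * (1 + |x.2|) ^ k) := by ring
  rw [integral_congr_ae (Filter.Eventually.of_forall key)]
  rw [show (volume : Measure (ℝ × ℝ)) = volume.prod volume from rfl] at hgint ⊢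
  rw [integral_prod _ hgint]
  refine integral_congr_ae (Filter.Eventually.of_forall fun q => ?_)
  simp only [integral_const_mul]
  ring
end

section
/- (Gibbons: taking p-moments is a Poisson map, three-dimensional case.) Let σ, ρ ∈ ℕ³ be multi-indices with σ_j + ρ_j ≥ 1 for each j ∈ {1,2,3}, let α, β : ℝ³ → ℝ be smooth and compactly supported, and let f : ℝ³ × ℝ³ → ℝ be measurable with (q,p) ↦ |f(q,p)|·(1+|p|)^(|σ|+|ρ|) integrable. Then ∬ f(q,p)·[α(q)p^σ, β(q)p^ρ](q,p) dq dp = Σ_{j=1}^{3} ∫_{ℝ³} A_{σ+ρ−1_j}(q)·( σ_j·α(q)·(∂β/∂q_j)(q) − ρ_j·β(q)·(∂α/∂q_j)(q) ) dq, where A_κ(q) := ∫_{ℝ³} p^κ f(q,p) dp for a multi-index κ ∈ ℕ³, 1_j is the multi-index with 1 in the j-th entry and 0 elsewhere, and a term with coefficient σ_j = 0 (respectively ρ_j = 0) is interpreted as 0. -/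
open MeasureTheory Finset

private lemma hasDerivAt_update3 (q : Fin 3 → ℝ) (j : Fin 3) (t : ℝ) :
    HasDerivAt (fun s : ℝ => Function.update q j s) (Pi.single j 1) t := by
  rw [hasDerivAt_pi]
  intro i
  rcases eq_or_ne i j with h | h
  · subst h
    simp only [Function.update_self, Pi.single_eq_same]
    exact hasDerivAt_id t
  · simp only [Function.update_of_ne h, Pi.single_eq_of_ne h]
    exact hasDerivAt_const t _

private lemma hasDerivAt_comp_update3 {β : (Fin 3 → ℝ) → ℝ} (hβ : ContDiff ℝ (⊤ : ℕ∞) β)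
    (q : Fin 3 → ℝ) (j : Fin 3) :
    HasDerivAt (fun t => β (Function.update q j t)) (fderiv ℝ β q (Pi.single j 1)) (q j) := by
  have h1 := hasDerivAt_update3 q j (q j)
  have h2 : HasFDerivAt β (fderiv ℝ β (Function.update q j (q j)))
      (Function.update q j (q j)) :=
    ((hβ.differentiable (by simp)) _).hasFDerivAt
  have h3 := h2.comp_hasDerivAt (q j) h1
  rwa [Function.update_eq_self] at h3

private lemma prod_update_pow (p : Fin 3 → ℝ) (j : Fin 3) (κ : Fin 3 → ℕ) (t : ℝ) :
    ∏ i, (Function.update p j t) i ^ κ i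
      = t ^ κ j * ∏ i ∈ univ.erase j, p i ^ κ i := by
  have h : ∀ i, (Function.update p j t) i ^ κ i
      = Function.update (fun i => p i ^ κ i) j (t ^ κ j) i := by
    intro i
    rcases eq_or_ne i j with h | h
    · subst h; simp
    · simp [Function.update_of_ne h]
  rw [Finset.prod_congr rfl fun i _ => h i, Finset.prod_update_of_mem (mem_univ j),
    Finset.sdiff_singleton_eq_erase]

/-- Key integration lemma: Fubini for monomial-weighted pairings. -/
private lemma key_fubini (N : ℕ) (f : (Fin 3 → ℝ) × (Fin 3 → ℝ) → ℝ) (hf : Measurable f)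
    (hint : Integrable
      (fun x : (Fin 3 → ℝ) × (Fin 3 → ℝ) => |f x| * (1 + ‖x.2‖) ^ N))
    (κ : Fin 3 → Fin 3 → ℕ) (hκ : ∀ j, ∑ i, κ j i ≤ N)
    (G : Fin 3 → (Fin 3 → ℝ) → ℝ) (hG : ∀ j, Continuous (G j))
    (hGs : ∀ j, HasCompactSupport (G j)) :
    ∫ x : (Fin 3 → ℝ) × (Fin 3 → ℝ),
        f x * ∑ j : Fin 3, (∏ i, x.2 i ^ κ j i) * G j x.1
      = ∑ j : Fin 3, ∫ q : Fin 3 → ℝ,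
          (∫ p : Fin 3 → ℝ, (∏ i, p i ^ κ j i) * f (q, p)) * G j q := by
  have hPc : ∀ j, Continuous fun p : Fin 3 → ℝ => ∏ i, p i ^ κ j i := fun j =>
    continuous_finset_prod _ fun i _ => (continuous_apply i).pow _
  have hPb : ∀ (j) (p : Fin 3 → ℝ), |∏ i, p i ^ κ j i| ≤ (1 + ‖p‖) ^ N := by
    intro j p
    have h1 : |∏ i, p i ^ κ j i| ≤ ∏ i, (1 + ‖p‖) ^ κ j i := by
      rw [Finset.abs_prod]
      refine Finset.prod_le_prod (fun i _ => abs_nonneg _) fun i _ => ?_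
      rw [abs_pow]
      refine pow_le_pow_left₀ (abs_nonneg _) ?_ _
      calc |p i| = ‖p i‖ := rfl
        _ ≤ ‖p‖ := norm_le_pi_norm p i
        _ ≤ 1 + ‖p‖ := by linarith
    calc |∏ i, p i ^ κ j i| ≤ ∏ i, (1 + ‖p‖) ^ κ j i := h1
      _ = (1 + ‖p‖) ^ (∑ i, κ j i) := by rw [Finset.prod_pow_eq_pow_sum]
      _ ≤ (1 + ‖p‖) ^ N := by
          refine pow_le_pow_right₀ ?_ (hκ j)
          have := norm_nonneg p; linarith
  have hInt : ∀ j, Integrable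
      (fun x : (Fin 3 → ℝ) × (Fin 3 → ℝ) => f x * ((∏ i, x.2 i ^ κ j i) * G j x.1)) := by
    intro j
    obtain ⟨C, hC⟩ := (hGs j).exists_bound_of_continuous (hG j)
    refine Integrable.mono' (hint.const_mul C) ?_ ?_
    · exact (hf.aestronglyMeasurable.mul
        (((hPc j).comp continuous_snd).mul ((hG j).comp continuous_fst)).aestronglyMeasurable)
    · filter_upwards with x
      have h1 : ‖f x * ((∏ i, x.2 i ^ κ j i) * G j x.1)‖
          = |f x| * (|∏ i, x.2 i ^ κ j i| * |G j x.1|) := by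
        rw [Real.norm_eq_abs, abs_mul, abs_mul]
      rw [h1]
      have h2 : |∏ i, x.2 i ^ κ j i| * |G j x.1| ≤ (1 + ‖x.2‖) ^ N * C := by
        have hpn : (0:ℝ) ≤ (1 + ‖x.2‖) ^ N := by positivity
        have hCx : |G j x.1| ≤ C := by
          have := hC x.1; rwa [Real.norm_eq_abs] at this
        exact mul_le_mul (hPb j x.2) hCx (abs_nonneg _) hpn
      calc |f x| * (|∏ i, x.2 i ^ κ j i| * |G j x.1|)
          ≤ |f x| * ((1 + ‖x.2‖) ^ N * C) :=
            mul_le_mul_of_nonneg_left h2 (abs_nonneg _)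
        _ = C * (|f x| * (1 + ‖x.2‖) ^ N) := by ring
  have hsplit : (fun x : (Fin 3 → ℝ) × (Fin 3 → ℝ) =>
      f x * ∑ j : Fin 3, (∏ i, x.2 i ^ κ j i) * G j x.1)
      = fun x => ∑ j : Fin 3, f x * ((∏ i, x.2 i ^ κ j i) * G j x.1) := by
    funext x; rw [Finset.mul_sum]
  rw [hsplit, integral_finset_sum _ fun j _ => hInt j]
  refine Finset.sum_congr rfl fun j _ => ?_
  have hj := hInt j
  rw [MeasureTheory.Measure.volume_eq_prod] at hj ⊢
  rw [MeasureTheory.integral_prod _ hj]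
  refine integral_congr_ae (Filter.Eventually.of_forall fun q => ?_)
  dsimp only
  rw [← integral_mul_const]
  exact integral_congr_ae (Filter.Eventually.of_forall fun p => by ring)

/-- Gibbons: taking p-moments is a Poisson map, 3D case.
The Lie–Poisson Vlasov pairing of the weighted monomials `α(q)p^σ` and `β(q)p^ρ`
against `f` equals the sum over `j` of the pairings of the components of the
Kupershmidt–Manin bracket against the moments `A_{σ+ρ−1_j}`. -/
theorem pmoments_poisson_map_3d
    (σ ρ : Fin 3 → ℕ) (hσρ : ∀ j, 1 ≤ σ j + ρ j)
    (α β : (Fin 3 → ℝ) → ℝ)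
    (hα : ContDiff ℝ (⊤ : ℕ∞) α) (hαs : HasCompactSupport α)
    (hβ : ContDiff ℝ (⊤ : ℕ∞) β) (hβs : HasCompactSupport β)
    (f : (Fin 3 → ℝ) × (Fin 3 → ℝ) → ℝ) (hf : Measurable f)
    (hint : Integrable
      (fun x : (Fin 3 → ℝ) × (Fin 3 → ℝ) =>
        |f x| * (1 + ‖x.2‖) ^ ((∑ j, σ j) + (∑ j, ρ j)))) :
    ∫ x : (Fin 3 → ℝ) × (Fin 3 → ℝ), f x *
      ∑ j : Fin 3,
        (deriv (fun t => α x.1 * ∏ i, (Function.update x.2 j t) i ^ σ i) (x.2 j)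
          * deriv (fun t => β (Function.update x.1 j t) * ∏ i, x.2 i ^ ρ i) (x.1 j)
        - deriv (fun t => α (Function.update x.1 j t) * ∏ i, x.2 i ^ σ i) (x.1 j)
          * deriv (fun t => β x.1 * ∏ i, (Function.update x.2 j t) i ^ ρ i) (x.2 j))
    = ∑ j : Fin 3, ∫ q : Fin 3 → ℝ,
        (∫ p : Fin 3 → ℝ, (∏ i, p i ^ (σ i + ρ i - if i = j then 1 else 0)) * f (q, p)) *
        ((σ j : ℝ) * α q * deriv (fun t => β (Function.update q j t)) (q j)
          - (ρ j : ℝ) * β q * deriv (fun t => α (Function.update q j t)) (q j)) := by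
  set G : Fin 3 → (Fin 3 → ℝ) → ℝ := fun j q =>
    (σ j : ℝ) * α q * deriv (fun t => β (Function.update q j t)) (q j)
      - (ρ j : ℝ) * β q * deriv (fun t => α (Function.update q j t)) (q j) with hGdef
  set κ : Fin 3 → Fin 3 → ℕ := fun j i => σ i + ρ i - if i = j then 1 else 0 with hκdef
  -- derivatives of compositions with updates
  have hDα : ∀ (q : Fin 3 → ℝ) (j : Fin 3),
      deriv (fun t => α (Function.update q j t)) (q j) = fderiv ℝ α q (Pi.single j 1) :=
    fun q j => (hasDerivAt_comp_update3 hα q j).deriv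
  have hDβ : ∀ (q : Fin 3 → ℝ) (j : Fin 3),
      deriv (fun t => β (Function.update q j t)) (q j) = fderiv ℝ β q (Pi.single j 1) :=
    fun q j => (hasDerivAt_comp_update3 hβ q j).deriv
  have hDαc : ∀ j : Fin 3, Continuous fun q : Fin 3 → ℝ =>
      deriv (fun t => α (Function.update q j t)) (q j) := by
    intro j
    have : (fun q : Fin 3 → ℝ => deriv (fun t => α (Function.update q j t)) (q j))
        = fun q => fderiv ℝ α q (Pi.single j 1) := funext fun q => hDα q j
    rw [this]
    exact (hα.continuous_fderiv (by simp)).clm_apply continuous_const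
  have hDβc : ∀ j : Fin 3, Continuous fun q : Fin 3 → ℝ =>
      deriv (fun t => β (Function.update q j t)) (q j) := by
    intro j
    have : (fun q : Fin 3 → ℝ => deriv (fun t => β (Function.update q j t)) (q j))
        = fun q => fderiv ℝ β q (Pi.single j 1) := funext fun q => hDβ q j
    rw [this]
    exact (hβ.continuous_fderiv (by simp)).clm_apply continuous_const
  have hGc : ∀ j, Continuous (G j) := fun j =>
    ((continuous_const.mul hα.continuous).mul (hDβc j)).sub
      ((continuous_const.mul hβ.continuous).mul (hDαc j))
  have hGs : ∀ j, HasCompactSupport (G j) := by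
    intro j
    have h1 : HasCompactSupport fun q => (σ j : ℝ) * α q *
        deriv (fun t => β (Function.update q j t)) (q j) :=
      HasCompactSupport.mul_right
        (HasCompactSupport.smul_left (f := fun _ => (σ j : ℝ)) hαs)
    have h2 : HasCompactSupport fun q => (ρ j : ℝ) * β q *
        deriv (fun t => α (Function.update q j t)) (q j) :=
      HasCompactSupport.mul_right
        (HasCompactSupport.smul_left (f := fun _ => (ρ j : ℝ)) hβs)
    have h2n : HasCompactSupport fun q => -((ρ j : ℝ) * β q *
        deriv (fun t => α (Function.update q j t)) (q j)) := h2.neg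
    exact h1.add h2n
  have hκb : ∀ j, ∑ i, κ j i ≤ (∑ j, σ j) + (∑ j, ρ j) := by
    intro j
    calc ∑ i, κ j i ≤ ∑ i, (σ i + ρ i) :=
          Finset.sum_le_sum fun i _ => Nat.sub_le _ _
      _ = (∑ j, σ j) + (∑ j, ρ j) := Finset.sum_add_distrib
  -- pointwise identity for the bracket
  have hpt : ∀ x : (Fin 3 → ℝ) × (Fin 3 → ℝ), ∀ j : Fin 3,
      (deriv (fun t => α x.1 * ∏ i, (Function.update x.2 j t) i ^ σ i) (x.2 j)
        * deriv (fun t => β (Function.update x.1 j t) * ∏ i, x.2 i ^ ρ i) (x.1 j)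
      - deriv (fun t => α (Function.update x.1 j t) * ∏ i, x.2 i ^ σ i) (x.1 j)
        * deriv (fun t => β x.1 * ∏ i, (Function.update x.2 j t) i ^ ρ i) (x.2 j))
      = (∏ i, x.2 i ^ κ j i) * G j x.1 := by
    rintro ⟨q, p⟩ j
    have hd1 : deriv (fun t => α q * ∏ i, (Function.update p j t) i ^ σ i) (p j)
        = α q * ((σ j : ℝ) * p j ^ (σ j - 1) * ∏ i ∈ univ.erase j, p i ^ σ i) := by
      have h : (fun t => α q * ∏ i, (Function.update p j t) i ^ σ i)
          = fun t => α q * (t ^ σ j * ∏ i ∈ univ.erase j, p i ^ σ i) :=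
        funext fun t => by rw [prod_update_pow]
      rw [h]
      exact (((hasDerivAt_pow (σ j) (p j)).mul_const _).const_mul (α q)).deriv
    have hd4 : deriv (fun t => β q * ∏ i, (Function.update p j t) i ^ ρ i) (p j)
        = β q * ((ρ j : ℝ) * p j ^ (ρ j - 1) * ∏ i ∈ univ.erase j, p i ^ ρ i) := by
      have h : (fun t => β q * ∏ i, (Function.update p j t) i ^ ρ i)
          = fun t => β q * (t ^ ρ j * ∏ i ∈ univ.erase j, p i ^ ρ i) :=
        funext fun t => by rw [prod_update_pow]
      rw [h]
      exact (((hasDerivAt_pow (ρ j) (p j)).mul_const _).const_mul (β q)).deriv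
    have hd2 : deriv (fun t => β (Function.update q j t) * ∏ i, p i ^ ρ i) (q j)
        = deriv (fun t => β (Function.update q j t)) (q j) * ∏ i, p i ^ ρ i :=
      deriv_mul_const (hasDerivAt_comp_update3 hβ q j).differentiableAt _
    have hd3 : deriv (fun t => α (Function.update q j t) * ∏ i, p i ^ σ i) (q j)
        = deriv (fun t => α (Function.update q j t)) (q j) * ∏ i, p i ^ σ i :=
      deriv_mul_const (hasDerivAt_comp_update3 hα q j).differentiableAt _
    simp only
    rw [hd1, hd2, hd3, hd4]
    have hP : ∏ i, p i ^ κ j i = p j ^ (σ j + ρ j - 1) *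
        ((∏ i ∈ univ.erase j, p i ^ σ i) * ∏ i ∈ univ.erase j, p i ^ ρ i) := by
      rw [← Finset.mul_prod_erase univ _ (mem_univ j)]
      congr 1
      · simp [hκdef]
      · rw [← Finset.prod_mul_distrib]
        refine Finset.prod_congr rfl fun i hi => ?_
        rw [hκdef]
        simp only [if_neg (Finset.ne_of_mem_erase hi), Nat.sub_zero, pow_add]
    have hPs : ∏ i, p i ^ σ i = p j ^ σ j * ∏ i ∈ univ.erase j, p i ^ σ i :=
      (Finset.mul_prod_erase univ _ (mem_univ j)).symm
    have hPr : ∏ i, p i ^ ρ i = p j ^ ρ j * ∏ i ∈ univ.erase j, p i ^ ρ i :=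
      (Finset.mul_prod_erase univ _ (mem_univ j)).symm
    rw [hP, hPs, hPr, hGdef]
    have h1 : (σ j : ℝ) * (p j ^ (σ j - 1) * p j ^ ρ j)
        = (σ j : ℝ) * p j ^ (σ j + ρ j - 1) := by
      rcases Nat.eq_zero_or_pos (σ j) with h | h
      · simp [h]
      · rw [← pow_add]
        congr 2
        omega
    have h2 : (ρ j : ℝ) * (p j ^ (ρ j - 1) * p j ^ σ j)
        = (ρ j : ℝ) * p j ^ (σ j + ρ j - 1) := by
      rcases Nat.eq_zero_or_pos (ρ j) with h | h
      · simp [h]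
      · rw [← pow_add]
        congr 2
        omega
    set Eσ := ∏ i ∈ univ.erase j, p i ^ σ i
    set Eρ := ∏ i ∈ univ.erase j, p i ^ ρ i
    set Dα := deriv (fun t => α (Function.update q j t)) (q j)
    set Dβ := deriv (fun t => β (Function.update q j t)) (q j)
    linear_combination (α q * Eσ * Dβ * Eρ) * h1 - (β q * Eσ * Eρ * Dα) * h2
  calc ∫ x : (Fin 3 → ℝ) × (Fin 3 → ℝ), f x *
      ∑ j : Fin 3,
        (deriv (fun t => α x.1 * ∏ i, (Function.update x.2 j t) i ^ σ i) (x.2 j)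
          * deriv (fun t => β (Function.update x.1 j t) * ∏ i, x.2 i ^ ρ i) (x.1 j)
        - deriv (fun t => α (Function.update x.1 j t) * ∏ i, x.2 i ^ σ i) (x.1 j)
          * deriv (fun t => β x.1 * ∏ i, (Function.update x.2 j t) i ^ ρ i) (x.2 j))
      = ∫ x : (Fin 3 → ℝ) × (Fin 3 → ℝ),
          f x * ∑ j : Fin 3, (∏ i, x.2 i ^ κ j i) * G j x.1 := by
        congr 1
        funext x
        congr 1
        exact Finset.sum_congr rfl fun j _ => hpt x j
    _ = ∑ j : Fin 3, ∫ q : Fin 3 → ℝ,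
          (∫ p : Fin 3 → ℝ, (∏ i, p i ^ κ j i) * f (q, p)) * G j q :=
        key_fubini _ f hf hint κ hκb G hGc hGs
end

section
/- Let a, b, c, d be natural numbers with a + c ≥ 1 and b + d ≥ 1, and let f : ℝ² → ℝ be measurable with (q,p) ↦ |f(q,p)|·(1+|q|)^(a+c−1)·(1+|p|)^(b+d−1) integrable on ℝ². Then ∬_{ℝ²} f(q,p)·[q^a p^b, q^c p^d](q,p) dq dp = (b·c − a·d)·∬_{ℝ²} f(q,p)·q^(a+c−1)·p^(b+d−1) dq dp. That is, the Lie–Poisson Vlasov pairing of phase-space monomials against f closes on the (q,p)-moments g_{â,b̂} := ∬ f(q,p) q^â p^b̂ dq dp. -/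
open MeasureTheory

/-- the Lie–Poisson Vlasov pairing of phase-space monomials against `f`
closes on the (q,p)-moments:
`∬ f·[q^a p^b, q^c p^d] dq dp = (b·c − a·d)·∬ f·q^(a+c−1)·p^(b+d−1) dq dp`. -/
theorem qp_moments_close_under_bracket
    (a b c d : ℕ) (hac : 1 ≤ a + c) (hbd : 1 ≤ b + d)
    (f : ℝ × ℝ → ℝ) (hf : Measurable f)
    (hint : Integrable
      (fun x : ℝ × ℝ => |f x| * (1 + |x.1|) ^ (a + c - 1) * (1 + |x.2|) ^ (b + d - 1))) :
    ∫ x : ℝ × ℝ, f x *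
        (deriv (fun p' => x.1 ^ a * p' ^ b) x.2 * deriv (fun q' => q' ^ c * x.2 ^ d) x.1
          - deriv (fun q' => q' ^ a * x.2 ^ b) x.1 * deriv (fun p' => x.1 ^ c * p' ^ d) x.2)
    = ((b * c - a * d : ℤ) : ℝ) * ∫ x : ℝ × ℝ, f x * x.1 ^ (a + c - 1) * x.2 ^ (b + d - 1) := by
  have key : ∀ x : ℝ × ℝ, f x *
        (deriv (fun p' => x.1 ^ a * p' ^ b) x.2 * deriv (fun q' => q' ^ c * x.2 ^ d) x.1
          - deriv (fun q' => q' ^ a * x.2 ^ b) x.1 * deriv (fun p' => x.1 ^ c * p' ^ d) x.2)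
      = ((b * c - a * d : ℤ) : ℝ) * (f x * x.1 ^ (a + c - 1) * x.2 ^ (b + d - 1)) := by
    intro x
    simp only [deriv_const_mul_field, deriv_mul_const_field, deriv_pow]
    rcases a with _ | a <;> rcases b with _ | b <;> rcases c with _ | c <;> rcases d with _ | d <;>
      simp_all <;> push_cast <;> ring
  simp only [key]
  exact integral_const_mul _ _
end

section
/- (Benney moment hierarchy from the Vlasov equation.) Let f : ℝ × ℝ × ℝ → ℝ, (q,p,t) ↦ f(q,p,t), be smooth, such that for every compact time interval the support of f restricted to that interval is compact. Define A_n(q,t) := ∫_ℝ p^n f(q,p,t) dp for n ∈ ℕ. If f satisfies the Vlasov equation ∂f/∂t + p·∂f/∂q − (∂A_0/∂q)·(∂f/∂p) = 0 on ℝ × ℝ × ℝ, then the moments satisfy Benney's equations: ∂A_0/∂t + ∂A_1/∂q = 0, and for every n ≥ 1, ∂A_n/∂t + ∂A_{n+1}/∂q + n·A_{n−1}·(∂A_0/∂q) = 0. -/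
open MeasureTheory Set Metric Filter

section BenneyAux

variable {f : ℝ × ℝ × ℝ → ℝ}

private lemma sect_q (hf : ContDiff ℝ (⊤ : ℕ∞) f) (q p t : ℝ) :
    HasDerivAt (fun q' => f (q', p, t)) (fderiv ℝ f (q, p, t) (1, 0, 0)) q :=
  (hf.differentiable (by simp) (q, p, t)).hasFDerivAt.comp_hasDerivAt q
    ((hasDerivAt_id q).prodMk (hasDerivAt_const q (p, t)))

private lemma sect_p (hf : ContDiff ℝ (⊤ : ℕ∞) f) (q p t : ℝ) :
    HasDerivAt (fun p' => f (q, p', t)) (fderiv ℝ f (q, p, t) (0, 1, 0)) p :=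
  (hf.differentiable (by simp) (q, p, t)).hasFDerivAt.comp_hasDerivAt p
    ((hasDerivAt_const p q).prodMk ((hasDerivAt_id p).prodMk (hasDerivAt_const p t)))

private lemma sect_t (hf : ContDiff ℝ (⊤ : ℕ∞) f) (q p t : ℝ) :
    HasDerivAt (fun t' => f (q, p, t')) (fderiv ℝ f (q, p, t) (0, 0, 1)) t :=
  (hf.differentiable (by simp) (q, p, t)).hasFDerivAt.comp_hasDerivAt t
    ((hasDerivAt_const t q).prodMk ((hasDerivAt_const t p).prodMk (hasDerivAt_id t)))

private lemma benney_key (hf : ContDiff ℝ (⊤ : ℕ∞) f)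
    (hsupp : ∀ a b : ℝ,
      IsCompact (closure {x : ℝ × ℝ × ℝ | f x ≠ 0 ∧ x.2.2 ∈ Set.Icc a b}))
    (q t : ℝ) (n : ℕ) :
    HasDerivAt (fun t' => ∫ p : ℝ, p ^ n * f (q, p, t'))
      (∫ p : ℝ, p ^ n * fderiv ℝ f (q, p, t) (0, 0, 1)) t ∧
    HasDerivAt (fun q' => ∫ p : ℝ, p ^ n * f (q', p, t))
      (∫ p : ℝ, p ^ n * fderiv ℝ f (q, p, t) (1, 0, 0)) q ∧
    (∫ p : ℝ, p ^ n * fderiv ℝ f (q, p, t) (0, 1, 0))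
      = -(n : ℝ) * ∫ p : ℝ, p ^ (n - 1) * f (q, p, t) ∧
    (∀ v : ℝ × ℝ × ℝ, Integrable (fun p : ℝ => p ^ n * fderiv ℝ f (q, p, t) v)) ∧
    Integrable (fun p : ℝ => p ^ n * f (q, p, t)) := by
  set S : Set (ℝ × ℝ × ℝ) := closure {x : ℝ × ℝ × ℝ | f x ≠ 0 ∧ x.2.2 ∈ Set.Icc (t - 1) (t + 1)}
    with hSdef
  have hS : IsCompact S := hsupp (t - 1) (t + 1)
  set K : Set ℝ := (fun x : ℝ × ℝ × ℝ => x.2.1) '' S with hKdef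
  have hK : IsCompact K := hS.image (continuous_fst.comp continuous_snd)
  -- vanishing of f and its derivative away from the support slab
  have hmemS : ∀ x : ℝ × ℝ × ℝ, f x ≠ 0 → x.2.2 ∈ Set.Icc (t - 1) (t + 1) → x ∈ S :=
    fun x h1 h2 => subset_closure ⟨h1, h2⟩
  have hf0 : ∀ q' p s, p ∉ K → s ∈ Set.Icc (t - 1) (t + 1) → f (q', p, s) = 0 := by
    intro q' p s hp hs
    by_contra h
    exact hp ⟨(q', p, s), hmemS _ h hs, rfl⟩
  have hD0 : ∀ q' p s, p ∉ K → s ∈ Set.Ioo (t - 1) (t + 1) → fderiv ℝ f (q', p, s) = 0 := by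
    intro q' p s hp hs
    have hU : IsOpen (Sᶜ ∩ (fun y : ℝ × ℝ × ℝ => y.2.2) ⁻¹' Set.Ioo (t - 1) (t + 1)) :=
      (hS.isClosed.isOpen_compl).inter (isOpen_Ioo.preimage (continuous_snd.comp continuous_snd))
    have hxU : (q', p, s) ∈ Sᶜ ∩ (fun y : ℝ × ℝ × ℝ => y.2.2) ⁻¹' Set.Ioo (t - 1) (t + 1) := by
      refine ⟨fun hx => hp ⟨(q', p, s), hx, rfl⟩, hs⟩
    have hfz : f =ᶠ[nhds (q', p, s)] fun _ => 0 := by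
      filter_upwards [hU.mem_nhds hxU] with x hx
      by_contra h
      exact hx.1 (hmemS x h (Set.mem_Icc_of_Ioo hx.2))
    rw [hfz.fderiv_eq, fderiv_const_apply]
  -- continuity
  have hcf : Continuous f := hf.continuous
  have hDc : ∀ v : ℝ × ℝ × ℝ, Continuous fun x : ℝ × ℝ × ℝ => fderiv ℝ f x v :=
    fun v => (hf.continuous_fderiv (by simp)).clm_apply continuous_const
  -- integrability of compactly supported continuous integrands
  have main_int : ∀ (m : ℕ) (h : ℝ → ℝ), Continuous h → (∀ p, p ∉ K → h p = 0) →
      Integrable (fun p : ℝ => p ^ m * h p) := by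
    intro m h hc h0
    refine Continuous.integrable_of_hasCompactSupport ((continuous_pow m).mul hc) ?_
    exact HasCompactSupport.intro hK fun p hp => by simp [h0 p hp]
  have htIcc : t ∈ Set.Icc (t - 1) (t + 1) := by constructor <;> linarith
  have htIoo : t ∈ Set.Ioo (t - 1) (t + 1) := by constructor <;> linarith
  have int_f : ∀ (m : ℕ) (q' : ℝ), Integrable (fun p : ℝ => p ^ m * f (q', p, t)) := by
    intro m q'
    exact main_int m (fun p => f (q', p, t))
      (hcf.comp (by fun_prop)) (fun p hp => hf0 q' p t hp htIcc)
  have int_D : ∀ (m : ℕ) (v : ℝ × ℝ × ℝ),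
      Integrable (fun p : ℝ => p ^ m * fderiv ℝ f (q, p, t) v) := by
    intro m v
    exact main_int m (fun p => fderiv ℝ f (q, p, t) v)
      ((hDc v).comp (by fun_prop)) (fun p hp => by show (fderiv ℝ f (q, p, t)) v = 0; rw [hD0 q p t hp htIoo]; rfl)
  -- bound constants
  set B : Set (ℝ × ℝ × ℝ) := Set.Icc (q - 1) (q + 1) ×ˢ K ×ˢ Set.Icc (t - 1) (t + 1) with hBdef
  have hB : IsCompact B := (isCompact_Icc.prod (hK.prod isCompact_Icc))
  have bound_lemma : ∀ (m : ℕ) (v : ℝ × ℝ × ℝ), ∃ C : ℝ,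
      ∀ x ∈ B, |x.2.1 ^ m * fderiv ℝ f x v| ≤ C := by
    intro m v
    have hcont : Continuous fun x : ℝ × ℝ × ℝ => |x.2.1 ^ m * fderiv ℝ f x v| :=
      (((continuous_fst.comp continuous_snd).pow m).mul (hDc v)).abs
    obtain ⟨C, hC⟩ := (hB.image hcont).bddAbove
    exact ⟨C, fun x hx => hC ⟨x, hx, rfl⟩⟩
  have bound_integrable : ∀ C : ℝ, Integrable (K.indicator fun _ => C) := by
    intro C
    rw [integrable_indicator_iff hK.isClosed.measurableSet]
    exact integrableOn_const hK.measure_lt_top.ne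
  -- part 1 : t-derivative
  have part1 : HasDerivAt (fun t' => ∫ p : ℝ, p ^ n * f (q, p, t'))
      (∫ p : ℝ, p ^ n * fderiv ℝ f (q, p, t) (0, 0, 1)) t := by
    obtain ⟨C, hC⟩ := bound_lemma n (0, 0, 1)
    refine (hasDerivAt_integral_of_dominated_loc_of_deriv_le (F := fun t' p => p ^ n * f (q, p, t'))
      (F' := fun t' p => p ^ n * fderiv ℝ f (q, p, t') (0, 0, 1))
      (bound := K.indicator fun _ => C) (ball_mem_nhds t one_pos) ?_ (int_f n q) ?_ ?_ (bound_integrable C) ?_).2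
    · exact Eventually.of_forall fun t' =>
        (((continuous_pow n).mul (hcf.comp (by fun_prop))).aestronglyMeasurable)
    · exact (((continuous_pow n).mul ((hDc (0,0,1)).comp (by fun_prop))).aestronglyMeasurable)
    · refine Eventually.of_forall fun p => fun t' ht' => ?_
      have ht'Ioo : t' ∈ Set.Ioo (t - 1) (t + 1) := by
        rw [Real.ball_eq_Ioo] at ht'; exact ht'
      by_cases hp : p ∈ K
      · have hxB : (q, p, t') ∈ B := ⟨by constructor <;> linarith, hp, Set.mem_Icc_of_Ioo ht'Ioo⟩
        calc ‖p ^ n * fderiv ℝ f (q, p, t') (0, 0, 1)‖ ≤ C := hC _ hxB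
        _ = K.indicator (fun _ => C) p := by rw [Set.indicator_of_mem hp]
      · show ‖p ^ n * fderiv ℝ f (q, p, t') (0, 0, 1)‖ ≤ K.indicator (fun _ => C) p
        rw [hD0 q p t' hp ht'Ioo, Set.indicator_of_notMem hp]
        simp
    · exact Eventually.of_forall fun p => fun t' _ => (sect_t hf q p t').const_mul (p ^ n)
  -- part 2 : q-derivative
  have part2 : HasDerivAt (fun q' => ∫ p : ℝ, p ^ n * f (q', p, t))
      (∫ p : ℝ, p ^ n * fderiv ℝ f (q, p, t) (1, 0, 0)) q := by
    obtain ⟨C, hC⟩ := bound_lemma n (1, 0, 0)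
    refine (hasDerivAt_integral_of_dominated_loc_of_deriv_le (F := fun q' p => p ^ n * f (q', p, t))
      (F' := fun q' p => p ^ n * fderiv ℝ f (q', p, t) (1, 0, 0))
      (bound := K.indicator fun _ => C) (ball_mem_nhds q one_pos) ?_ (int_f n q) ?_ ?_ (bound_integrable C) ?_).2
    · exact Eventually.of_forall fun q' =>
        (((continuous_pow n).mul (hcf.comp (by fun_prop))).aestronglyMeasurable)
    · exact (((continuous_pow n).mul ((hDc (1,0,0)).comp (by fun_prop))).aestronglyMeasurable)
    · refine Eventually.of_forall fun p => fun q' hq' => ?_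
      have hq'I : q' ∈ Set.Icc (q - 1) (q + 1) := by
        rw [Real.ball_eq_Ioo] at hq'; exact Set.mem_Icc_of_Ioo hq'
      by_cases hp : p ∈ K
      · have hxB : (q', p, t) ∈ B := ⟨hq'I, hp, htIcc⟩
        calc ‖p ^ n * fderiv ℝ f (q', p, t) (1, 0, 0)‖ ≤ C := hC _ hxB
        _ = K.indicator (fun _ => C) p := by rw [Set.indicator_of_mem hp]
      · show ‖p ^ n * fderiv ℝ f (q', p, t) (1, 0, 0)‖ ≤ K.indicator (fun _ => C) p
        rw [hD0 q' p t hp htIoo, Set.indicator_of_notMem hp]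
        simp
    · exact Eventually.of_forall fun p => fun q' _ => (sect_q hf q' p t).const_mul (p ^ n)
  -- part 3 : integration by parts in p
  have part3 : (∫ p : ℝ, p ^ n * fderiv ℝ f (q, p, t) (0, 1, 0))
      = -(n : ℝ) * ∫ p : ℝ, p ^ (n - 1) * f (q, p, t) := by
    set g : ℝ → ℝ := fun p => p ^ n * f (q, p, t) with hgdef
    have hgC1 : ContDiff ℝ 1 g := by
      refine ContDiff.mul (by fun_prop) ?_
      exact (hf.of_le (by simp)).comp (by fun_prop)
    have hgCS : HasCompactSupport g := by
      refine HasCompactSupport.intro hK fun p hp => ?_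
      simp [hgdef, hf0 q p t hp htIcc]
    have hgd : ∀ p : ℝ, HasDerivAt g
        ((n : ℝ) * p ^ (n - 1) * f (q, p, t) + p ^ n * fderiv ℝ f (q, p, t) (0, 1, 0)) p :=
      fun p => (hasDerivAt_pow n p).mul (sect_p hf q p t)
    have hderiv_g : deriv g = fun p =>
        (n : ℝ) * p ^ (n - 1) * f (q, p, t) + p ^ n * fderiv ℝ f (q, p, t) (0, 1, 0) :=
      funext fun p => (hgd p).deriv
    have hint_sum : Integrable (fun p : ℝ =>
        (n : ℝ) * p ^ (n - 1) * f (q, p, t) + p ^ n * fderiv ℝ f (q, p, t) (0, 1, 0)) := by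
      refine Integrable.add ?_ (int_D n (0, 1, 0))
      exact ((int_f (n - 1) q).const_mul (n : ℝ)).congr
        (Eventually.of_forall fun p => by ring)
    have hzero : (∫ p : ℝ, deriv g p) = 0 := by
      have h1 := hgCS.integral_Iic_deriv_eq hgC1 0
      have h2 := hgCS.integral_Ioi_deriv_eq hgC1 0
      have hio : IntegrableOn (deriv g) (Set.Iic 0) := by
        rw [hderiv_g]; exact hint_sum.integrableOn
      have hio2 : IntegrableOn (deriv g) (Set.Ioi 0) := by
        rw [hderiv_g]; exact hint_sum.integrableOn
      have := intervalIntegral.integral_Iic_add_Ioi (b := (0:ℝ)) hio hio2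
      rw [h1, h2] at this
      linarith [this]
    rw [hderiv_g] at hzero
    rw [integral_add (((int_f (n - 1) q).const_mul (n : ℝ)).congr
        (Eventually.of_forall fun p => by ring)) (int_D n (0, 1, 0))] at hzero
    have : (∫ p : ℝ, (n : ℝ) * p ^ (n - 1) * f (q, p, t))
        = (n : ℝ) * ∫ p : ℝ, p ^ (n - 1) * f (q, p, t) := by
      rw [← integral_const_mul]
      congr 1
      funext p
      ring
    rw [this] at hzero
    linarith
  exact ⟨part1, part2, part3, int_D n, int_f n q⟩

end BenneyAux

/-- Benney moment hierarchy from the Vlasov equation.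
If a smooth `f(q,p,t)`, with compact support over every compact time interval,
satisfies the Vlasov equation `∂f/∂t + p·∂f/∂q − (∂A₀/∂q)·(∂f/∂p) = 0`, then the
moments `A n q t = ∫ p^n f(q,p,t) dp` satisfy Benney's equations. -/
theorem benney_hierarchy_from_vlasov
    (f : ℝ × ℝ × ℝ → ℝ) (hf : ContDiff ℝ (⊤ : ℕ∞) f)
    (hsupp : ∀ a b : ℝ,
      IsCompact (closure {x : ℝ × ℝ × ℝ | f x ≠ 0 ∧ x.2.2 ∈ Set.Icc a b}))
    (A : ℕ → ℝ → ℝ → ℝ)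
    (hA : ∀ n q t, A n q t = ∫ p : ℝ, p ^ n * f (q, p, t))
    (hVlasov : ∀ q p t,
      deriv (fun t' => f (q, p, t')) t + p * deriv (fun q' => f (q', p, t)) q
        - deriv (fun q' => A 0 q' t) q * deriv (fun p' => f (q, p', t)) p = 0) :
    (∀ q t, deriv (fun t' => A 0 q t') t + deriv (fun q' => A 1 q' t) q = 0) ∧
    (∀ n : ℕ, 1 ≤ n → ∀ q t,
      deriv (fun t' => A n q t') t + deriv (fun q' => A (n + 1) q' t) q
        + (n : ℝ) * A (n - 1) q t * deriv (fun q' => A 0 q' t) q = 0) := by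
  have main : ∀ (n : ℕ) (q t : ℝ),
      deriv (fun t' => A n q t') t + deriv (fun q' => A (n + 1) q' t) q
        + (n : ℝ) * A (n - 1) q t * deriv (fun q' => A 0 q' t) q = 0 := by
    intro n q t
    obtain ⟨k1, -, k3, kD, -⟩ := benney_key hf hsupp q t n
    obtain ⟨-, k2, -, kD1, -⟩ := benney_key hf hsupp q t (n + 1)
    set c := deriv (fun q' => A 0 q' t) q with hc
    have hVf : ∀ p : ℝ, fderiv ℝ f (q, p, t) (0, 0, 1)
        = c * fderiv ℝ f (q, p, t) (0, 1, 0) - p * fderiv ℝ f (q, p, t) (1, 0, 0) := by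
      intro p
      have h := hVlasov q p t
      rw [(sect_t hf q p t).deriv, (sect_q hf q p t).deriv, (sect_p hf q p t).deriv,
        ← hc] at h
      linarith
    have e1 : (fun t' => A n q t') = fun t' => ∫ p : ℝ, p ^ n * f (q, p, t') :=
      funext fun t' => hA n q t'
    have e2 : (fun q' => A (n + 1) q' t) = fun q' => ∫ p : ℝ, p ^ (n + 1) * f (q', p, t) :=
      funext fun q' => hA (n + 1) q' t
    rw [e1, k1.deriv, e2, k2.deriv, hA (n - 1) q t]
    have estep : (∫ p : ℝ, p ^ n * fderiv ℝ f (q, p, t) (0, 0, 1))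
        = c * (∫ p : ℝ, p ^ n * fderiv ℝ f (q, p, t) (0, 1, 0))
          - ∫ p : ℝ, p ^ (n + 1) * fderiv ℝ f (q, p, t) (1, 0, 0) := by
      rw [← integral_const_mul, ← integral_sub ((kD (0, 1, 0)).const_mul c) (kD1 (1, 0, 0))]
      congr 1
      funext p
      rw [hVf p]
      ring
    rw [estep, k3]
    ring
  refine ⟨fun q t => ?_, fun n _ q t => main n q t⟩
  have := main 0 q t
  simpa using this
end

section
/- (Equivalence of the EPSymp Hamiltonian and the p-moment Hamiltonian.) Let F be a finite set of pairs (n,m) ∈ ℕ × ℕ, let N := max over F of n and of m, let G_{nm} : ℝ × ℝ → ℝ be bounded and measurable for each (n,m) ∈ F, and let f : ℝ² → ℝ be measurable with (q,p) ↦ |f(q,p)|·(1+|p|)^N integrable on ℝ². Define 𝒢(q,p,q',p') := Σ_{(n,m)∈F} p^n·G_{nm}(q,q')·p'^m and A_n(q) := ∫_ℝ p^n f(q,p) dp. Then (1/2)·∬∬ f(q,p)·𝒢(q,p,q',p')·f(q',p') dq dp dq' dp' = (1/2)·Σ_{(n,m)∈F} ∬ A_n(q)·G_{nm}(q,q')·A_m(q')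 dq dq'. That is, whenever the EPSymp metric kernel 𝒢 has an expansion in powers of the momenta, the EPSymp Hamiltonian H[f] equals the quadratic p-moment Hamiltonian h = (1/2)Σ ⟨A_n, G_{nm} * A_m⟩. -/
open MeasureTheory

noncomputable section

namespace EPSympAux

def e4 : ((ℝ × ℝ) × (ℝ × ℝ)) ≃ᵐ ((ℝ × ℝ) × (ℝ × ℝ)) where
  toEquiv := Equiv.prodProdProdComm ℝ ℝ ℝ ℝ
  measurable_toFun :=
    (measurable_fst.fst.prodMk measurable_snd.fst).prodMk
      (measurable_fst.snd.prodMk measurable_snd.snd)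
  measurable_invFun :=
    (measurable_fst.fst.prodMk measurable_snd.fst).prodMk
      (measurable_fst.snd.prodMk measurable_snd.snd)

theorem mp4 :
    MeasurePreserving (e4 : ((ℝ × ℝ) × (ℝ × ℝ)) ≃ᵐ ((ℝ × ℝ) × (ℝ × ℝ)))
      (((volume : Measure ℝ).prod volume).prod ((volume : Measure ℝ).prod volume))
      (((volume : Measure ℝ).prod volume).prod ((volume : Measure ℝ).prod volume)) := by
  set v := (volume : Measure ℝ)
  have i1 := (measurePreserving_prodAssoc v v v).symm MeasurableEquiv.prodAssoc
  have i2 := (Measure.measurePreserving_swap (μ := v) (ν := v)).prod (MeasurePreserving.id v)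
  have i3 := measurePreserving_prodAssoc v v v
  have inner := i3.comp (i2.comp i1)
  have step1 := measurePreserving_prodAssoc v v (v.prod v)
  have step2 := (MeasurePreserving.id v).prod inner
  have step3 := (measurePreserving_prodAssoc v v (v.prod v)).symm MeasurableEquiv.prodAssoc
  exact step3.comp (step2.comp step1)

theorem hpow {n N : ℕ} (hn : n ≤ N) (p x : ℝ) :
    ‖p ^ n * x‖ ≤ |x| * (1 + |p|) ^ N := by
  rw [Real.norm_eq_abs, abs_mul, abs_pow, mul_comm]
  have h1 : |p| ^ n ≤ (1 + |p|) ^ n :=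
    pow_le_pow_left₀ (abs_nonneg p) (by linarith [abs_nonneg p]) n
  have h2 : (1 + |p|) ^ n ≤ (1 + |p|) ^ N :=
    pow_le_pow_right₀ (by linarith [abs_nonneg p]) hn
  exact mul_le_mul_of_nonneg_left (h1.trans h2) (abs_nonneg x)

theorem key_int (f : ℝ × ℝ → ℝ) (hf : Measurable f) (N : ℕ)
    (hint : Integrable (fun x : ℝ × ℝ => |f x| * (1 + |x.2|) ^ N)
      ((volume : Measure ℝ).prod volume))
    (n m : ℕ) (hn : n ≤ N) (hm : m ≤ N) (Gnm : ℝ → ℝ → ℝ)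
    (hGm : Measurable fun x : ℝ × ℝ => Gnm x.1 x.2) (C : ℝ)
    (hC : ∀ x y : ℝ, |Gnm x y| ≤ C) :
    Integrable
      (fun z : (ℝ × ℝ) × (ℝ × ℝ) =>
        f z.1 * (z.1.2 ^ n * Gnm z.1.1 z.2.1 * z.2.2 ^ m) * f z.2)
      (((volume : Measure ℝ).prod volume).prod ((volume : Measure ℝ).prod volume)) := by
  have hC0 : (0 : ℝ) ≤ C := (abs_nonneg _).trans (hC 0 0)
  refine Integrable.mono' ((hint.mul_prod hint).const_mul C) ?_ (ae_of_all _ fun z => ?_)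
  · exact (((hf.comp measurable_fst).mul
      (((measurable_fst.snd.pow_const n).mul
        (hGm.comp (measurable_fst.fst.prodMk measurable_snd.fst))).mul
        (measurable_snd.snd.pow_const m))).mul
      (hf.comp measurable_snd)).aestronglyMeasurable
  · have h1 : |z.1.2| ^ n ≤ (1 + |z.1.2|) ^ N := by
      calc |z.1.2| ^ n ≤ (1 + |z.1.2|) ^ n :=
            pow_le_pow_left₀ (abs_nonneg _) (by linarith [abs_nonneg z.1.2]) n
        _ ≤ (1 + |z.1.2|) ^ N := pow_le_pow_right₀ (by linarith [abs_nonneg z.1.2]) hn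
    have h2 : |z.2.2| ^ m ≤ (1 + |z.2.2|) ^ N := by
      calc |z.2.2| ^ m ≤ (1 + |z.2.2|) ^ m :=
            pow_le_pow_left₀ (abs_nonneg _) (by linarith [abs_nonneg z.2.2]) m
        _ ≤ (1 + |z.2.2|) ^ N := pow_le_pow_right₀ (by linarith [abs_nonneg z.2.2]) hm
    calc ‖f z.1 * (z.1.2 ^ n * Gnm z.1.1 z.2.1 * z.2.2 ^ m) * f z.2‖
        = |Gnm z.1.1 z.2.1| * ((|f z.1| * |z.1.2| ^ n) * (|f z.2| * |z.2.2| ^ m)) := by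
          rw [Real.norm_eq_abs, abs_mul, abs_mul, abs_mul, abs_mul, abs_pow, abs_pow]; ring
      _ ≤ C * ((|f z.1| * (1 + |z.1.2|) ^ N) * (|f z.2| * (1 + |z.2.2|) ^ N)) := by
          gcongr
          exact hC _ _


theorem key (f : ℝ × ℝ → ℝ) (hf : Measurable f) (N : ℕ)
    (hint : Integrable (fun x : ℝ × ℝ => |f x| * (1 + |x.2|) ^ N)
      ((volume : Measure ℝ).prod volume))
    (n m : ℕ) (hn : n ≤ N) (hm : m ≤ N) (Gnm : ℝ → ℝ → ℝ)
    (hGm : Measurable fun x : ℝ × ℝ => Gnm x.1 x.2) (C : ℝ)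
    (hC : ∀ x y : ℝ, |Gnm x y| ≤ C) :
    ∫ z : (ℝ × ℝ) × (ℝ × ℝ),
        f z.1 * (z.1.2 ^ n * Gnm z.1.1 z.2.1 * z.2.2 ^ m) * f z.2
        ∂(((volume : Measure ℝ).prod volume).prod ((volume : Measure ℝ).prod volume))
      = ∫ q : ℝ, ∫ q' : ℝ,
          (∫ p : ℝ, p ^ n * f (q, p)) * Gnm q q' * (∫ p' : ℝ, p' ^ m * f (q', p')) := by
  set v := (volume : Measure ℝ) with hv
  have hC0 : (0 : ℝ) ≤ C := (abs_nonneg _).trans (hC 0 0)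
  set A : ℕ → ℝ → ℝ := fun k q => ∫ p, p ^ k * f (q, p) with hA
  set B : ℝ → ℝ := fun q => ∫ p, |f (q, p)| * (1 + |p|) ^ N with hB
  have hA_sm : ∀ k : ℕ, StronglyMeasurable (A k) := fun k =>
    ((measurable_snd.pow_const k).mul hf).stronglyMeasurable.integral_prod_right'
  have hB_sm : StronglyMeasurable B :=
    (hf.abs.mul ((measurable_const.add
      measurable_snd.abs).pow_const N)).stronglyMeasurable.integral_prod_right'
  have hB_int : Integrable B v := hint.integral_prod_left
  have haeA : ∀ k : ℕ, k ≤ N → ∀ᵐ q ∂v, |A k q| ≤ B q := by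
    intro k hk
    filter_upwards [hint.prod_right_ae] with q hq
    have hik : Integrable (fun p => p ^ k * f (q, p)) v :=
      hq.mono' ((measurable_id.pow_const k).mul
        (hf.comp (measurable_const.prodMk measurable_id))).aestronglyMeasurable
        (ae_of_all _ fun p => hpow hk p _)
    calc |A k q| = ‖∫ p, p ^ k * f (q, p) ∂v‖ := (Real.norm_eq_abs _).symm
      _ ≤ ∫ p, ‖p ^ k * f (q, p)‖ ∂v := norm_integral_le_integral_norm _
      _ ≤ ∫ p, |f (q, p)| * (1 + |p|) ^ N ∂v :=
          integral_mono hik.norm hq fun p => hpow hk p _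
  have hΦ_meas : Measurable fun x : ℝ × ℝ => A n x.1 * Gnm x.1 x.2 * A m x.2 :=
    (((hA_sm n).measurable.comp measurable_fst).mul hGm).mul
      ((hA_sm m).measurable.comp measurable_snd)
  have hΦ_int : Integrable (fun x : ℝ × ℝ => A n x.1 * Gnm x.1 x.2 * A m x.2) (v.prod v) := by
    refine Integrable.mono' ((hB_int.mul_prod hB_int).const_mul C)
      hΦ_meas.aestronglyMeasurable ?_
    have hset : MeasurableSet
        {x : ℝ × ℝ | ‖A n x.1 * Gnm x.1 x.2 * A m x.2‖ ≤ C * (B x.1 * B x.2)} :=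
      measurableSet_le hΦ_meas.norm
        (measurable_const.mul ((hB_sm.measurable.comp measurable_fst).mul
          (hB_sm.measurable.comp measurable_snd)))
    rw [Measure.ae_prod_iff_ae_ae hset]
    filter_upwards [haeA n hn] with q hq
    filter_upwards [haeA m hm] with q' hq'
    have hBq : 0 ≤ B q := (abs_nonneg _).trans hq
    calc ‖A n q * Gnm q q' * A m q'‖ = |Gnm q q'| * (|A n q| * |A m q'|) := by
          rw [Real.norm_eq_abs, abs_mul, abs_mul]; ring
      _ ≤ C * (B q * B q') :=
          mul_le_mul (hC q q') (mul_le_mul hq hq' (abs_nonneg _) hBq)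
            (mul_nonneg (abs_nonneg _) (abs_nonneg _)) hC0
  have hg_int := key_int f hf N hint n m hn hm Gnm hGm C hC
  have hh_int : Integrable
      (fun w : (ℝ × ℝ) × (ℝ × ℝ) =>
        f (w.1.1, w.2.1) * (w.2.1 ^ n * Gnm w.1.1 w.1.2 * w.2.2 ^ m) * f (w.1.2, w.2.2))
      ((v.prod v).prod (v.prod v)) :=
    (mp4.integrable_comp_emb e4.measurableEmbedding).mpr hg_int
  calc ∫ z : (ℝ × ℝ) × (ℝ × ℝ),
        f z.1 * (z.1.2 ^ n * Gnm z.1.1 z.2.1 * z.2.2 ^ m) * f z.2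
        ∂((v.prod v).prod (v.prod v))
      = ∫ w : (ℝ × ℝ) × (ℝ × ℝ),
          f (w.1.1, w.2.1) * (w.2.1 ^ n * Gnm w.1.1 w.1.2 * w.2.2 ^ m) * f (w.1.2, w.2.2)
          ∂((v.prod v).prod (v.prod v)) :=
        (mp4.integral_comp' fun z : (ℝ × ℝ) × (ℝ × ℝ) =>
          f z.1 * (z.1.2 ^ n * Gnm z.1.1 z.2.1 * z.2.2 ^ m) * f z.2).symm
    _ = ∫ x : ℝ × ℝ, ∫ y : ℝ × ℝ,
          f (x.1, y.1) * (y.1 ^ n * Gnm x.1 x.2 * y.2 ^ m) * f (x.2, y.2)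
          ∂(v.prod v) ∂(v.prod v) := integral_prod _ hh_int
    _ = ∫ x : ℝ × ℝ, A n x.1 * Gnm x.1 x.2 * A m x.2 ∂(v.prod v) := by
        refine integral_congr_ae (ae_of_all _ fun x => ?_)
        have hrw : ∀ y : ℝ × ℝ,
            f (x.1, y.1) * (y.1 ^ n * Gnm x.1 x.2 * y.2 ^ m) * f (x.2, y.2)
            = Gnm x.1 x.2 * ((y.1 ^ n * f (x.1, y.1)) * (y.2 ^ m * f (x.2, y.2))) :=
          fun y => by ring
        simp_rw [hrw]
        rw [integral_const_mul,
          integral_prod_mul (fun p : ℝ => p ^ n * f (x.1, p)) (fun p' : ℝ => p' ^ m * f (x.2, p'))]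
        ring
    _ = ∫ q : ℝ, ∫ q' : ℝ, A n q * Gnm q q' * A m q' ∂v ∂v := integral_prod _ hΦ_int

end EPSympAux

/-- equivalence of the EPSymp Hamiltonian and the p-moment Hamiltonian.
When the kernel `𝒢(q,p,q',p') = Σ_{(n,m)∈F} p^n G_{nm}(q,q') p'^m`, the EPSymp
Hamiltonian `H[f]` equals the quadratic p-moment Hamiltonian
`(1/2) Σ ∬ A_n(q) G_{nm}(q,q') A_m(q') dq dq'`. -/
theorem epsymp_hamiltonian_eq_moment_hamiltonian
    (F : Finset (ℕ × ℕ)) (G : ℕ × ℕ → ℝ → ℝ → ℝ)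
    (hGmeas : ∀ nm ∈ F, Measurable (fun x : ℝ × ℝ => G nm x.1 x.2))
    (hGbdd : ∀ nm ∈ F, ∃ C : ℝ, ∀ x y : ℝ, |G nm x y| ≤ C)
    (N : ℕ) (hN : N = F.sup fun nm => max nm.1 nm.2)
    (f : ℝ × ℝ → ℝ) (hf : Measurable f)
    (hint : Integrable (fun x : ℝ × ℝ => |f x| * (1 + |x.2|) ^ N)) :
    (1 / 2 : ℝ) * ∫ x : ℝ × ℝ, ∫ y : ℝ × ℝ,
        f x * (∑ nm ∈ F, x.2 ^ nm.1 * G nm x.1 y.1 * y.2 ^ nm.2) * f y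
    = (1 / 2 : ℝ) * ∑ nm ∈ F, ∫ q : ℝ, ∫ q' : ℝ,
        (∫ p : ℝ, p ^ nm.1 * f (q, p)) * G nm q q' * (∫ p' : ℝ, p' ^ nm.2 * f (q', p')) := by
  have hint' : Integrable (fun x : ℝ × ℝ => |f x| * (1 + |x.2|) ^ N)
      ((volume : Measure ℝ).prod volume) := hint
  congr 1
  have hnN : ∀ nm ∈ F, nm.1 ≤ N ∧ nm.2 ≤ N := fun nm h => by
    have := Finset.le_sup (f := fun nm : ℕ × ℕ => max nm.1 nm.2) h
    rw [← hN] at this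
    exact ⟨le_trans (le_max_left _ _) this, le_trans (le_max_right _ _) this⟩
  have hInts : ∀ nm ∈ F, Integrable
      (fun z : (ℝ × ℝ) × (ℝ × ℝ) =>
        f z.1 * (z.1.2 ^ nm.1 * G nm z.1.1 z.2.1 * z.2.2 ^ nm.2) * f z.2)
      (((volume : Measure ℝ).prod volume).prod ((volume : Measure ℝ).prod volume)) := by
    intro nm h
    obtain ⟨C, hC⟩ := hGbdd nm h
    exact EPSympAux.key_int f hf N hint' nm.1 nm.2 (hnN nm h).1 (hnN nm h).2 (G nm)
      (hGmeas nm h) C hC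
  calc ∫ x : ℝ × ℝ, ∫ y : ℝ × ℝ,
        f x * (∑ nm ∈ F, x.2 ^ nm.1 * G nm x.1 y.1 * y.2 ^ nm.2) * f y
      = ∫ x : ℝ × ℝ, ∫ y : ℝ × ℝ,
          ∑ nm ∈ F, f x * (x.2 ^ nm.1 * G nm x.1 y.1 * y.2 ^ nm.2) * f y := by
        simp_rw [Finset.mul_sum, Finset.sum_mul]
    _ = ∫ z : (ℝ × ℝ) × (ℝ × ℝ), ∑ nm ∈ F,
          f z.1 * (z.1.2 ^ nm.1 * G nm z.1.1 z.2.1 * z.2.2 ^ nm.2) * f z.2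
          ∂(((volume : Measure ℝ).prod volume).prod ((volume : Measure ℝ).prod volume)) :=
        (integral_prod _ (integrable_finset_sum F hInts)).symm
    _ = ∑ nm ∈ F, ∫ z : (ℝ × ℝ) × (ℝ × ℝ),
          f z.1 * (z.1.2 ^ nm.1 * G nm z.1.1 z.2.1 * z.2.2 ^ nm.2) * f z.2
          ∂(((volume : Measure ℝ).prod volume).prod ((volume : Measure ℝ).prod volume)) :=
        integral_finset_sum F hInts
    _ = ∑ nm ∈ F, ∫ q : ℝ, ∫ q' : ℝ,
          (∫ p : ℝ, p ^ nm.1 * f (q, p)) * G nm q q' * (∫ p' : ℝ, p' ^ nm.2 * f (q', p')) := by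
        refine Finset.sum_congr rfl fun nm h => ?_
        obtain ⟨C, hC⟩ := hGbdd nm h
        exact EPSympAux.key f hf N hint' nm.1 nm.2 (hnN nm h).1 (hnN nm h).2 (G nm)
          (hGmeas nm h) C hC
end
end

section
/- (Singular solution Ansatz for geodesic flows of Vlasov p-moments, one-dimensional case.) Let F be a finite set of pairs (n,s) ∈ ℕ × ℕ, let N ∈ ℕ, and for each (n,s) ∈ F let G_{ns} : ℝ × ℝ → ℝ be continuously differentiable, with ∂₁G_{ns} denoting its partial derivative in the first argument. Let Q_j, P_j : ℝ → ℝ (j = 1,…,N) be continuously differentiable curves satisfying, for all t and all j, Q̇_j(t) = Σ_{(n,s)∈F, n≥1} Σ_{k=1}^{N} n·P_j(t)^(n−1)·P_k(t)^s·G_{ns}(Q_j(t),Q_k(t)) and Ṗ_j(t) = − Σ_{(n,s)∈F} Σ_{k=1}^{N} P_j(t)^n·P_k(t)^s·∂₁G_{ns}(Q_j(t),Q_k(t)). Then for every m ∈ ℕ and every continuously differentiable compactly supported φ : ℝ → ℝ, the singular moments A_m(t) := Σ_j P_j(t)^m·δ_{Q_j(t)} satisfy the geodesic p-moment equations weakly: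 d/dt [ Σ_{j=1}^{N} P_j(t)^m·φ(Q_j(t)) ] = Σ_{(n,s)∈F} Σ_{j,k=1}^{N} P_k(t)^s·P_j(t)^(m+n−1)·( n·φ'(Q_j(t))·G_{ns}(Q_j(t),Q_k(t)) − m·φ(Q_j(t))·∂₁G_{ns}(Q_j(t),Q_k(t)) ), where any term whose integer coefficient n or m vanishes is interpreted as 0 (so that the exponent m+n−1 only occurs when m+n ≥ 1). -/
open Finset

/-! Pairing `A_m = Σ_j P_j^m δ_{Q_j}` with `φ` gives `Σ_j P_j^m φ(Q_j)`. Differentiating each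
summand by the product and chain rules and substituting the canonical equations for `Q̇_j`
and `Ṗ_j`, both contributions carry the same power `P_j^(m+n-1)`, since
`m P^(m-1) P^n = m P^(m+n-1)` and `P^m n P^(n-1) = n P^(m+n-1)` (both sides vanish when the
integer coefficient does). -/

lemma natCast_mul_pow_sub_one_mul_pow {R : Type*} [CommSemiring R] (p : R) (m n : ℕ) :
    (m : R) * p ^ (m - 1) * p ^ n = m * p ^ (m + n - 1) := by
  cases m with
  | zero => simp
  | succ m => rw [Nat.add_sub_cancel, mul_assoc, ← pow_add, Nat.add_right_comm, Nat.add_sub_cancel]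

lemma hasDerivAt_pow_mul_comp {p q φ : ℝ → ℝ} {p' q' φ' t : ℝ} (m : ℕ)
    (hp : HasDerivAt p p' t) (hq : HasDerivAt q q' t) (hφ : HasDerivAt φ φ' (q t)) :
    HasDerivAt (fun τ => p τ ^ m * φ (q τ))
      ((m : ℝ) * p t ^ (m - 1) * p' * φ (q t) + p t ^ m * (φ' * q')) t :=
  (hp.pow m).mul (hφ.comp t hq)

lemma natCast_mul_pow_sub_one_mul_neg_sum_add_pow_mul_sum {R ι κ : Type*} [CommRing R]
    (s : Finset ι) (u : Finset κ) (n : ι → ℕ) (w g dg : ι → κ → R) (p x y : R) (m : ℕ) :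
    (m : R) * p ^ (m - 1) * (-∑ i ∈ s, ∑ k ∈ u, p ^ n i * w i k * dg i k) * x
        + p ^ m * (y * ∑ i ∈ s, ∑ k ∈ u, (n i : R) * p ^ (n i - 1) * w i k * g i k)
      = ∑ i ∈ s, ∑ k ∈ u, w i k * p ^ (m + n i - 1) *
          ((n i : R) * y * g i k - m * x * dg i k) := by
  simp only [mul_neg, neg_mul, mul_sum, sum_mul, ← sum_neg_distrib, ← sum_add_distrib]
  refine sum_congr rfl fun i _ => sum_congr rfl fun k _ => ?_
  have hm := natCast_mul_pow_sub_one_mul_pow p m (n i)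
  have hn := natCast_mul_pow_sub_one_mul_pow p (n i) m
  rw [Nat.add_comm (n i) m] at hn
  linear_combination (-(w i k * x * dg i k)) * hm + (w i k * y * g i k) * hn

theorem singular_solution_ansatz_geodesic_pmoments_general
    (F : Finset (ℕ × ℕ)) (N : ℕ)
    (G : ℕ × ℕ → ℝ → ℝ → ℝ)
    (Q P : Fin N → ℝ → ℝ)
    (hQ : ∀ j, ContDiff ℝ 1 (Q j)) (hP : ∀ j, ContDiff ℝ 1 (P j))
    (hQeq : ∀ j t, deriv (Q j) t = ∑ ns ∈ F, ∑ k : Fin N,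
        (ns.1 : ℝ) * P j t ^ (ns.1 - 1) * P k t ^ ns.2 * G ns (Q j t) (Q k t))
    (hPeq : ∀ j t, deriv (P j) t = - ∑ ns ∈ F, ∑ k : Fin N,
        P j t ^ ns.1 * P k t ^ ns.2 * deriv (fun x => G ns x (Q k t)) (Q j t)) :
    ∀ (m : ℕ) (φ : ℝ → ℝ), ContDiff ℝ 1 φ → HasCompactSupport φ → ∀ t : ℝ,
      deriv (fun τ => ∑ j : Fin N, P j τ ^ m * φ (Q j τ)) t
      = ∑ ns ∈ F, ∑ j : Fin N, ∑ k : Fin N,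
          P k t ^ ns.2 * P j t ^ (m + ns.1 - 1) *
            ((ns.1 : ℝ) * deriv φ (Q j t) * G ns (Q j t) (Q k t)
              - (m : ℝ) * φ (Q j t) * deriv (fun x => G ns x (Q k t)) (Q j t)) := by
  intro m φ hφ _ t
  have hasDerivAt_of_contDiff {f : ℝ → ℝ} (hf : ContDiff ℝ 1 f) (x : ℝ) :
      HasDerivAt f (deriv f x) x :=
    (hf.differentiable one_ne_zero x).hasDerivAt
  have hpairing := HasDerivAt.fun_sum (u := univ) fun j _ =>
    hasDerivAt_pow_mul_comp m (hasDerivAt_of_contDiff (hP j) t)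
      (hasDerivAt_of_contDiff (hQ j) t) (hasDerivAt_of_contDiff hφ (Q j t))
  rw [hpairing.deriv, sum_comm]
  refine sum_congr rfl fun j _ => ?_
  rw [hQeq j t, hPeq j t]
  exact natCast_mul_pow_sub_one_mul_neg_sum_add_pow_mul_sum F univ Prod.fst
    (fun ns k => P k t ^ ns.2) _ _ _ _ _ m

/-- singular solution Ansatz for geodesic flows of Vlasov p-moments, 1D.
If the parameters `(Q_j, P_j)` satisfy the stated canonical ODEs, then the singular
moments `A_m(t) = Σ_j P_j(t)^m δ_{Q_j(t)}` satisfy the geodesic p-moment equations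
weakly, i.e. paired against every C¹ compactly supported test function `φ`.
Terms whose integer coefficient (`n` or `m`) vanishes are interpreted as `0` via the
real coefficients `(n : ℝ)`, `(m : ℝ)`. -/
theorem singular_solution_ansatz_geodesic_pmoments
    (F : Finset (ℕ × ℕ)) (N : ℕ)
    (G : ℕ × ℕ → ℝ → ℝ → ℝ)
    (hG : ∀ ns ∈ F, ContDiff ℝ 1 fun x : ℝ × ℝ => G ns x.1 x.2)
    (Q P : Fin N → ℝ → ℝ)
    (hQ : ∀ j, ContDiff ℝ 1 (Q j)) (hP : ∀ j, ContDiff ℝ 1 (P j))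
    (hQeq : ∀ j t, deriv (Q j) t = ∑ ns ∈ F, ∑ k : Fin N,
        (ns.1 : ℝ) * P j t ^ (ns.1 - 1) * P k t ^ ns.2 * G ns (Q j t) (Q k t))
    (hPeq : ∀ j t, deriv (P j) t = - ∑ ns ∈ F, ∑ k : Fin N,
        P j t ^ ns.1 * P k t ^ ns.2 * deriv (fun x => G ns x (Q k t)) (Q j t)) :
    ∀ (m : ℕ) (φ : ℝ → ℝ), ContDiff ℝ 1 φ → HasCompactSupport φ → ∀ t : ℝ,
      deriv (fun τ => ∑ j : Fin N, P j τ ^ m * φ (Q j τ)) t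
      = ∑ ns ∈ F, ∑ j : Fin N, ∑ k : Fin N,
          P k t ^ ns.2 * P j t ^ (m + ns.1 - 1) *
            ((ns.1 : ℝ) * deriv φ (Q j t) * G ns (Q j t) (Q k t)
              - (m : ℝ) * φ (Q j t) * deriv (fun x => G ns x (Q k t)) (Q j t)) :=
  singular_solution_ansatz_geodesic_pmoments_general F N G Q P hQ hP hQeq hPeq
end
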